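/- Let u be a tempered distribution on ℝⁿ with supp 𝓕u ⊂ K̃ = {ξ : 1/2 < |ξ| < 1}, and let R_s be extended to tempered distributions by the same formula. Then there is s_0 > 0, depending only on η, such that for each s ≥ s_0 there is m ∈ ℕ (depending on s) with supp 𝓕(R_s u) ⊂ K_m ∪ K_{m+1} ∪ K_{m+2}. More precisely: if η = 0 then supp 𝓕(R_s u) ⊂ {ξ : s^τ/2 < |ξ| < s^τ}, and if η ≠ 0 then for all s with 2 s^τ < s|η| one has supp 𝓕(R_s u) ⊂ {ξ : s|η|/2 < |ξ| < 2 s|η|}. -/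

import Mathlib

/-!
Statement 9: Let u be a tempered distribution on ℝⁿ with supp 𝓕u ⊂ K̃ = {1/2 < |ξ| < 1},
with R_s extended to tempered distributions by the same formula
(R_s u)(x) = s^{τn/p} e^{i s x·η} u(s^τ(x − y)).
Then there is s₀ > 0, depending only on η, such that for each s ≥ s₀ there is m ∈ ℕ with
supp 𝓕(R_s u) ⊂ K_m ∪ K_{m+1} ∪ K_{m+2}. More precisely: if η = 0,
supp 𝓕(R_s u) ⊂ {s^τ/2 < |ξ| < s^τ}; and if η ≠ 0 then for all s with 2 s^τ < s|η|,
supp 𝓕(R_s u) ⊂ {s|η|/2 < |ξ| < 2 s|η|}.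

A tempered distribution is modeled as a continuous linear functional
T : 𝒮(ℝⁿ) → ℂ.  The support conditions on 𝓕T and 𝓕(R_s T) are expressed by their
canonical duality characterizations: 𝓕T(h) = T(𝓕h), so supp 𝓕T avoids an open set
where the (plain-function) Fourier transform of each test function g = 𝓕h is supported
away from it; similarly (R_s T)(𝓕h) = T(R_sᵗ 𝓕h), and with g = R_sᵗ(𝓕h) the function
𝓕h = (R_sᵗ)^{-1} g is given by x ↦ s^{τn − τn/p} e^{−i s x·η} g(s^τ(x−y)), whose
(inverse) Fourier transform ξ ↦ ∫ e^{i x·ξ} (R_sᵗ)^{-1}g (x) dx must be supported away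
from the target set.
-/

open MeasureTheory Real Complex Filter Topology ENNReal

noncomputable section

abbrev En (n : ℕ) := EuclideanSpace ℝ (Fin n)

/-- Fourier transform with the convention `û(ξ) = ∫ e^{−i x·ξ} u(x) dx`. -/
def paperFT (n : ℕ) (g : En n → ℂ) (ξ : En n) : ℂ :=
  ∫ x : En n, Complex.exp (-(Complex.I * ((inner ℝ x ξ : ℝ) : ℂ))) * g x

/-- The sets `K_0 = {|ξ| ≤ 2}`, `K_j = {2^{j−1} ≤ |ξ| ≤ 2^{j+1}}`. -/
def Kset (n : ℕ) : ℕ → Set (En n)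
  | 0 => {ξ | ‖ξ‖ ≤ 2}
  | (j + 1) => {ξ | (2 : ℝ) ^ (j : ℤ) ≤ ‖ξ‖ ∧ ‖ξ‖ ≤ (2 : ℝ) ^ ((j : ℤ) + 2)}

/-- `supp 𝓕T ⊆ A` for a tempered distribution `T`, via duality:
`𝓕T(h) = T(𝓕h) = 0` whenever `supp h ∩ A = ∅`; as `h` runs over 𝒮, `g := 𝓕h` runs
over 𝒮 and (for symmetric `A`) the condition on `h` states that the plain-function
Fourier transform of `g` has support disjoint from `A`. -/
def FTsuppDist (n : ℕ) (T : SchwartzMap (En n) ℂ →L[ℝ] ℂ) (A : Set (En n)) : Prop :=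
  ∀ g : SchwartzMap (En n) ℂ, tsupport (paperFT n (⇑g)) ∩ A = ∅ → T g = 0

/-- `supp 𝓕(R_s T) ⊆ A` for a tempered distribution `T`, via duality:
`𝓕(R_s T)(h) = T(R_sᵗ 𝓕 h)`; substituting `g = R_sᵗ(𝓕h)`, the test function `h` has
(up to a nonzero constant and for symmetric `A`) the same support as
`ξ ↦ ∫ e^{i x·ξ} s^{τn−τn/p} e^{−i s x·η} g(s^τ(x−y)) dx`, which must avoid `A`. -/
def FTRsSuppDist (n : ℕ) (p τ : ℝ) (y η : En n) (s : ℝ)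
    (T : SchwartzMap (En n) ℂ →L[ℝ] ℂ) (A : Set (En n)) : Prop :=
  ∀ g : SchwartzMap (En n) ℂ,
    tsupport (fun ξ : En n =>
        ∫ x : En n, Complex.exp (Complex.I * ((inner ℝ x ξ : ℝ) : ℂ)) *
          (((s ^ (τ * n - τ * n / p) : ℝ) : ℂ) *
            Complex.exp (-(Complex.I * (s : ℂ) * ((inner ℝ x η : ℝ) : ℂ))) *
            g ((s ^ τ : ℝ) • (x - y)))) ∩ A = ∅ →
    T g = 0

/-!
Translation, dilation and modulation act on the Fourier side by a unimodular phase, a positive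
factor and an affine change of frequency. Hence the kernel defining `supp 𝓕(R_s T)` is a
nowhere-vanishing multiple of `paperFT g ∘ Φ` with `Φ ξ = s^{-τ} (s η - ξ)` a homeomorphism, and
`supp 𝓕(R_s T)` is contained in the image `s η - s^τ K̃` of `supp 𝓕T`. For `η = 0` this is the
annulus `s^τ K̃`; for `η ≠ 0` and `2 s^τ < s |η|`, which holds for large `s` since `τ < 1`,
it lies in the annulus `s|η|/2 < |ξ| < 2 s|η|`. Any annulus `r < |ξ| < 4r` is covered by three
consecutive dyadic shells `K_m`.
-/

theorem tsupport_mul_left_of_ne_zero {X M₀ : Type*} [TopologicalSpace X] [MulZeroClass M₀]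
    [NoZeroDivisors M₀] {c f : X → M₀} (hc : ∀ x, c x ≠ 0) :
    tsupport (fun x => c x * f x) = tsupport f := by
  unfold tsupport
  congr 1
  ext x
  simp [hc x]

variable {n : ℕ}

theorem paperFT_comp_sub_right (f : En n → ℂ) (y θ : En n) :
    paperFT n (fun x => f (x - y)) θ
      = Complex.exp (-(Complex.I * ((inner ℝ y θ : ℝ) : ℂ))) * paperFT n f θ := by
  let h : En n → ℂ := fun x => Complex.exp (-(Complex.I * ((inner ℝ (x + y) θ : ℝ) : ℂ))) * f x
  calc paperFT n (fun x => f (x - y)) θ = ∫ x, h (x - y) := by simp [h, paperFT]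
    _ = ∫ x, h x := integral_sub_right_eq_self h y
    _ = _ := by
      rw [paperFT, ← integral_const_mul]
      congr 1 with x
      simp only [h, inner_add_left, Complex.ofReal_add, mul_add, neg_add, Complex.exp_add]
      ring

theorem paperFT_comp_smul (g : En n → ℂ) {a : ℝ} (ha : a ≠ 0) (θ : En n) :
    paperFT n (fun x => g (a • x)) θ = ((|a ^ n|⁻¹ : ℝ) : ℂ) * paperFT n g (a⁻¹ • θ) := by
  let h : En n → ℂ := fun v => Complex.exp (-(Complex.I * ((inner ℝ v (a⁻¹ • θ) : ℝ) : ℂ))) * g v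
  have hinner (x : En n) : inner ℝ (a • x) (a⁻¹ • θ) = inner ℝ x θ := by
    rw [real_inner_smul_left, real_inner_smul_right, mul_inv_cancel_left₀ ha]
  calc paperFT n (fun x => g (a • x)) θ = ∫ x, h (a • x) := by simp [h, paperFT, hinner]
    _ = _ := by
      rw [Measure.integral_comp_smul, finrank_euclideanSpace_fin, Complex.real_smul, abs_inv]
      rfl

theorem integral_modulated_dilation_eq (s : ℝ) {a : ℝ} (ha : a ≠ 0) (y η : En n) (C : ℂ)
    (g : En n → ℂ) (ξ : En n) :
    ∫ x : En n, Complex.exp (Complex.I * ((inner ℝ x ξ : ℝ) : ℂ)) *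
        (C * Complex.exp (-(Complex.I * (s : ℂ) * ((inner ℝ x η : ℝ) : ℂ))) * g (a • (x - y)))
      = C * Complex.exp (-(Complex.I * ((inner ℝ y (s • η - ξ) : ℝ) : ℂ))) *
          ((|a ^ n|⁻¹ : ℝ) : ℂ) * paperFT n g (a⁻¹ • (s • η - ξ)) := by
  have hphase (x : En n) : Complex.exp (Complex.I * ((inner ℝ x ξ : ℝ) : ℂ)) *
      Complex.exp (-(Complex.I * (s : ℂ) * ((inner ℝ x η : ℝ) : ℂ)))
        = Complex.exp (-(Complex.I * ((inner ℝ x (s • η - ξ) : ℝ) : ℂ))) := by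
    rw [← Complex.exp_add, inner_sub_right, real_inner_smul_right]
    push_cast
    ring_nf
  calc _ = C * paperFT n (fun x => g (a • (x - y))) (s • η - ξ) := by
        rw [paperFT, ← integral_const_mul]
        congr 1 with x
        rw [← hphase]
        ring
    _ = _ := by
      rw [paperFT_comp_sub_right (fun x => g (a • x)), paperFT_comp_smul g ha]
      ring

theorem FTRsSuppDist.mono {p τ : ℝ} {y η : En n} {s : ℝ} {T : SchwartzMap (En n) ℂ →L[ℝ] ℂ}
    {A B : Set (En n)} (h : FTRsSuppDist n p τ y η s T A) (hAB : A ⊆ B) :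
    FTRsSuppDist n p τ y η s T B := fun g hg =>
  h g (Set.subset_empty_iff.1 (hg ▸ Set.inter_subset_inter_right _ hAB))

theorem FTRsSuppDist_of_mapsTo (p τ : ℝ) (y η : En n) {s : ℝ} (hs : 0 < s)
    {T : SchwartzMap (En n) ℂ →L[ℝ] ℂ} {A B : Set (En n)} (hT : FTsuppDist n T B)
    (hAB : Set.MapsTo (fun w => s • η - s ^ τ • w) B A) :
    FTRsSuppDist n p τ y η s T A := by
  intro g hg
  have ha : s ^ τ ≠ 0 := (Real.rpow_pos_of_pos hs τ).ne'
  let Φ : En n ≃ₜ En n :=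
    (Homeomorph.subLeft (s • η)).trans (Homeomorph.smulOfNeZero _ (inv_ne_zero ha))
  have htsupport : tsupport (fun ξ : En n => ∫ x : En n,
      Complex.exp (Complex.I * ((inner ℝ x ξ : ℝ) : ℂ)) *
        (((s ^ (τ * n - τ * n / p) : ℝ) : ℂ) *
          Complex.exp (-(Complex.I * (s : ℂ) * ((inner ℝ x η : ℝ) : ℂ))) *
          g ((s ^ τ : ℝ) • (x - y)))) = Φ ⁻¹' tsupport (paperFT n g) := by
    simp_rw [integral_modulated_dilation_eq s ha]
    rw [tsupport_mul_left_of_ne_zero, ← tsupport_comp_eq_preimage]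
    · rfl
    · intro ξ
      have := (Real.rpow_pos_of_pos hs (τ * n - τ * n / p)).ne'
      simp [Complex.exp_ne_zero, ha, this]
  refine hT g (Set.eq_empty_of_forall_notMem fun w ⟨hw, hwB⟩ => ?_)
  have hΦ : Φ (s • η - s ^ τ • w) = w := by
    simp [Φ, Homeomorph.smulOfNeZero_apply, smul_smul, inv_mul_cancel₀ ha]
  exact Set.eq_empty_iff_forall_notMem.1 hg _
    ⟨by rw [htsupport, Set.mem_preimage, hΦ]; exact hw, hAB hwB⟩

section UnitAnnulus

variable {E : Type*} [NormedAddCommGroup E] [NormedSpace ℝ E] {a : ℝ}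

theorem mapsTo_neg_smul_unitAnnulus (ha : 0 < a) :
    Set.MapsTo (fun w : E => -(a • w)) {w | 1 / 2 < ‖w‖ ∧ ‖w‖ < 1}
      {ξ | a / 2 < ‖ξ‖ ∧ ‖ξ‖ < a} := fun w ⟨hw1, hw2⟩ => by
  show a / 2 < ‖-(a • w)‖ ∧ ‖-(a • w)‖ < a
  rw [norm_neg, norm_smul, Real.norm_of_nonneg ha.le]
  constructor <;> nlinarith

theorem mapsTo_sub_smul_unitAnnulus (ha : 0 < a) {v : E} (hv : 2 * a < ‖v‖) :
    Set.MapsTo (fun w : E => v - a • w) {w | 1 / 2 < ‖w‖ ∧ ‖w‖ < 1}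
      {ξ | ‖v‖ / 2 < ‖ξ‖ ∧ ‖ξ‖ < 2 * ‖v‖} := fun w ⟨_, hw⟩ => by
  have haw : ‖a • w‖ < a := by
    rw [norm_smul, Real.norm_of_nonneg ha.le]
    exact mul_lt_of_lt_one_right ha hw
  exact ⟨by linarith [norm_sub_norm_le v (a • w)], by linarith [norm_sub_le v (a • w)]⟩

end UnitAnnulus

theorem exists_forall_ge_two_mul_rpow_lt {τ c : ℝ} (hτ : τ < 1) (hc : 0 < c) :
    ∃ s₀ : ℝ, 0 < s₀ ∧ ∀ s : ℝ, s₀ ≤ s → 2 * s ^ τ < s * c := by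
  obtain ⟨s₁, hs₁⟩ := eventually_atTop.1
    ((tendsto_rpow_atTop (sub_pos.2 hτ)).eventually_gt_atTop (2 / c))
  refine ⟨max s₁ 1, by positivity, fun s hs => ?_⟩
  have hs0 : 0 < s := by linarith [le_max_right s₁ 1]
  calc 2 * s ^ τ = 2 / c * s ^ τ * c := by field_simp
    _ < s ^ (1 - τ) * s ^ τ * c := by
      gcongr
      exact hs₁ s (le_of_max_le_left hs)
    _ = s * c := by rw [← Real.rpow_add hs0, sub_add_cancel, Real.rpow_one]

theorem setOf_norm_mem_Icc_subset_Kset_union (j : ℕ) :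
    {ξ : En n | (2 : ℝ) ^ (j : ℤ) ≤ ‖ξ‖ ∧ ‖ξ‖ ≤ (2 : ℝ) ^ ((j : ℤ) + 3)}
      ⊆ Kset n (j + 1) ∪ Kset n (j + 2) := by
  rintro ξ ⟨hlo, hhi⟩
  by_cases hmid : ‖ξ‖ ≤ (2 : ℝ) ^ ((j : ℤ) + 2)
  · exact Or.inl ⟨hlo, hmid⟩
  · have hle : (2 : ℝ) ^ ((j : ℤ) + 1) ≤ (2 : ℝ) ^ ((j : ℤ) + 2) :=
      zpow_le_zpow_right₀ one_le_two (by omega)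
    refine Or.inr ⟨?_, ?_⟩ <;> push_cast
    · linarith
    · rwa [add_assoc]

theorem exists_annulus_subset_Kset_union {r : ℝ} (hr : 0 < r) :
    ∃ m : ℕ, {ξ : En n | r < ‖ξ‖ ∧ ‖ξ‖ < 4 * r}
      ⊆ Kset n m ∪ Kset n (m + 1) ∪ Kset n (m + 2) := by
  by_cases hr2 : r ≤ 2
  · refine ⟨0, fun ξ ⟨hlo, hhi⟩ => ?_⟩
    by_cases hξ : ‖ξ‖ ≤ 2
    · exact Or.inl (Or.inl hξ)
    · have := setOf_norm_mem_Icc_subset_Kset_union (n := n) 0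
        (⟨by norm_num; linarith, by norm_num; linarith⟩ : _ ∧ _)
      rw [Set.union_assoc]
      exact Or.inr this
  · set j := Nat.log 2 ⌊r⌋₊
    have hj : Int.log 2 r = j := Int.log_of_one_le_right 2 (by linarith)
    have hjr : (2 : ℝ) ^ (j : ℤ) ≤ r := by
      simpa [hj] using Int.zpow_log_le_self (b := 2) one_lt_two hr
    have hrj : r < (2 : ℝ) ^ ((j : ℤ) + 1) := by
      simpa [hj] using Int.lt_zpow_succ_log_self (b := 2) one_lt_two r
    have h8 : (2 : ℝ) ^ ((j : ℤ) + 3) = 4 * 2 ^ ((j : ℤ) + 1) := by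
      rw [show (j : ℤ) + 3 = 2 + (j + 1) by ring, zpow_add₀ two_ne_zero]
      norm_num
    refine ⟨j + 1, fun ξ ⟨hlo, hhi⟩ => Or.inl ?_⟩
    exact setOf_norm_mem_Icc_subset_Kset_union j ⟨by linarith, by linarith⟩

theorem statement_9_general (n : ℕ) (p τ : ℝ) (hτ3 : τ < 1 / 3) (y η : En n)
    (T : SchwartzMap (En n) ℂ →L[ℝ] ℂ)
    (hsupp : FTsuppDist n T {ξ : En n | 1 / 2 < ‖ξ‖ ∧ ‖ξ‖ < 1}) :
    (∃ s₀ : ℝ, 0 < s₀ ∧ ∀ s : ℝ, s₀ ≤ s → ∃ m : ℕ,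
        FTRsSuppDist n p τ y η s T (Kset n m ∪ Kset n (m + 1) ∪ Kset n (m + 2))) ∧
    (η = 0 → ∀ s : ℝ, 0 < s →
        FTRsSuppDist n p τ y η s T {ξ : En n | s ^ τ / 2 < ‖ξ‖ ∧ ‖ξ‖ < s ^ τ}) ∧
    (η ≠ 0 → ∀ s : ℝ, 0 < s → 2 * s ^ τ < s * ‖η‖ →
        FTRsSuppDist n p τ y η s T
          {ξ : En n | s * ‖η‖ / 2 < ‖ξ‖ ∧ ‖ξ‖ < 2 * s * ‖η‖}) := by
  have hzero : η = 0 → ∀ s : ℝ, 0 < s →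
      FTRsSuppDist n p τ y η s T {ξ : En n | s ^ τ / 2 < ‖ξ‖ ∧ ‖ξ‖ < s ^ τ} := by
    rintro rfl s hs
    refine FTRsSuppDist_of_mapsTo p τ y 0 hs hsupp ?_
    simpa using mapsTo_neg_smul_unitAnnulus (E := En n) (Real.rpow_pos_of_pos hs τ)
  have hne : η ≠ 0 → ∀ s : ℝ, 0 < s → 2 * s ^ τ < s * ‖η‖ →
      FTRsSuppDist n p τ y η s T {ξ : En n | s * ‖η‖ / 2 < ‖ξ‖ ∧ ‖ξ‖ < 2 * s * ‖η‖} := by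
    intro _ s hs hlt
    have hsη : ‖s • η‖ = s * ‖η‖ := by rw [norm_smul, Real.norm_of_nonneg hs.le]
    refine FTRsSuppDist_of_mapsTo p τ y η hs hsupp ?_
    simpa only [hsη, mul_assoc] using
      mapsTo_sub_smul_unitAnnulus (v := s • η) (Real.rpow_pos_of_pos hs τ) (by rwa [hsη])
  refine ⟨?_, hzero, hne⟩
  rcases eq_or_ne η 0 with hη | hη
  · refine ⟨1, one_pos, fun s hs => ?_⟩
    have ha := Real.rpow_pos_of_pos (one_pos.trans_le hs) τ
    obtain ⟨m, hm⟩ := exists_annulus_subset_Kset_union (n := n) (half_pos ha)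
    exact ⟨m, (hzero hη s (by linarith)).mono fun ξ hξ => hm ⟨hξ.1, by linarith [hξ.2]⟩⟩
  · obtain ⟨s₀, hs₀, hlt⟩ := exists_forall_ge_two_mul_rpow_lt (by linarith) (norm_pos_iff.2 hη)
    refine ⟨s₀, hs₀, fun s hs => ?_⟩
    obtain ⟨m, hm⟩ := exists_annulus_subset_Kset_union (n := n)
      (half_pos (mul_pos (hs₀.trans_le hs) (norm_pos_iff.2 hη)))
    exact ⟨m, (hne hη s (by linarith) (hlt s hs)).mono fun ξ hξ => hm ⟨hξ.1, by linarith [hξ.2]⟩⟩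

theorem statement_9 (n : ℕ) (hn : 1 ≤ n) (p τ : ℝ) (hp : 1 < p)
    (hτ : 0 < τ) (hτ3 : τ < 1 / 3) (y η : En n)
    (T : SchwartzMap (En n) ℂ →L[ℝ] ℂ)
    (hsupp : FTsuppDist n T {ξ : En n | 1 / 2 < ‖ξ‖ ∧ ‖ξ‖ < 1}) :
    (∃ s₀ : ℝ, 0 < s₀ ∧ ∀ s : ℝ, s₀ ≤ s → ∃ m : ℕ,
        FTRsSuppDist n p τ y η s T (Kset n m ∪ Kset n (m + 1) ∪ Kset n (m + 2))) ∧
    (η = 0 → ∀ s : ℝ, 0 < s →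
        FTRsSuppDist n p τ y η s T {ξ : En n | s ^ τ / 2 < ‖ξ‖ ∧ ‖ξ‖ < s ^ τ}) ∧
    (η ≠ 0 → ∀ s : ℝ, 0 < s → 2 * s ^ τ < s * ‖η‖ →
        FTRsSuppDist n p τ y η s T
          {ξ : En n | s * ‖η‖ / 2 < ‖ξ‖ ∧ ‖ξ‖ < 2 * s * ‖η‖}) :=
  statement_9_general n p τ hτ3 y η T hsupp

end
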